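/- Define J_{n:m} : ℂ× × ℂ× → ℝ³ by J_{n:m}(a) = (Re(w), Im(w), (|a₁|²/m − |a₂|²/n)/2) where w = a₁^m·conj(a₂)^n/(√(nm)·|a₁|^{m-1}·|a₂|^{n-1}). Then μ₁² + μ₂² + μ₃² = R_{n:m}(a)² where (μ₁,μ₂,μ₃) = J_{n:m}(a) and R_{n:m}(a) = (|a₁|²/m + |a₂|²/n)/2. In particular, the image of each level set R_{n:m}^{-1}(r), r > 0, under J_{n:m} lies on the sphere of radius r. -/

import Mathlib

/-!
The complex coordinate `w` of `J_{n:m}(a)` has modulus `|a₁| |a₂| / √(nm)`, so with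
`x = |a₁|²/m` and `y = |a₂|²/n` the identity is `x y + ((x - y)/2)² = ((x + y)/2)²`.
-/

/-- `J_{n:m}` viewed as a map to ℝ³. -/
noncomputable def Jnm (n m : ℕ) (a : ℂ × ℂ) : ℝ × ℝ × ℝ :=
  let w : ℂ := a.1 ^ m * ((starRingEnd ℂ) a.2) ^ n
    / ((Real.sqrt (n * m) : ℂ) * (‖a.1‖ : ℂ) ^ (m - 1)
        * (‖a.2‖ : ℂ) ^ (n - 1))
  (w.re, w.im, (‖a.1‖ ^ 2 / m - ‖a.2‖ ^ 2 / n) / 2)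

/-- `R_{n:m}`. -/
noncomputable def Rnm (n m : ℕ) (a : ℂ × ℂ) : ℝ :=
  (‖a.1‖ ^ 2 / m + ‖a.2‖ ^ 2 / n) / 2

lemma sq_pow_div_sqrt_mul_pow_pred (x : ℝ) (k : ℕ) :
    (x ^ k / (√k * x ^ (k - 1))) ^ 2 = x ^ 2 / k := by
  rcases k with _ | k
  · simp
  rcases eq_or_ne x 0 with rfl | hx
  · simp
  rw [Nat.add_sub_cancel, div_pow, mul_pow, Real.sq_sqrt (Nat.cast_nonneg _)]
  field_simp
  ring

lemma Jnm_fst_sq_add_snd_fst_sq (n m : ℕ) (a : ℂ × ℂ) :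
    (Jnm n m a).1 ^ 2 + (Jnm n m a).2.1 ^ 2 = ‖a.1‖ ^ 2 / m * (‖a.2‖ ^ 2 / n) := by
  set w : ℂ := a.1 ^ m * ((starRingEnd ℂ) a.2) ^ n
    / ((Real.sqrt (n * m) : ℂ) * (‖a.1‖ : ℂ) ^ (m - 1) * (‖a.2‖ : ℂ) ^ (n - 1))
  have hw : ‖w‖ = ‖a.1‖ ^ m / (√m * ‖a.1‖ ^ (m - 1)) * (‖a.2‖ ^ n / (√n * ‖a.2‖ ^ (n - 1))) := by
    simp only [w, norm_div, norm_mul, norm_pow, Complex.norm_conj, Complex.norm_real,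
      Real.norm_eq_abs, abs_norm, abs_of_nonneg (Real.sqrt_nonneg _),
      Real.sqrt_mul (Nat.cast_nonneg n)]
    ring
  change w.re ^ 2 + w.im ^ 2 = _
  rw [← Complex.sq_norm_sub_sq_re w, hw, mul_pow, sq_pow_div_sqrt_mul_pow_pred,
    sq_pow_div_sqrt_mul_pow_pred]
  ring

theorem stmt_10_general (n m : ℕ)
    (a : ℂ × ℂ) :
    ((Jnm n m a).1 ^ 2 + (Jnm n m a).2.1 ^ 2 + (Jnm n m a).2.2 ^ 2 = Rnm n m a ^ 2) ∧
    (∀ r : ℝ, 0 < r → Rnm n m a = r →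
      Real.sqrt ((Jnm n m a).1 ^ 2 + (Jnm n m a).2.1 ^ 2 + (Jnm n m a).2.2 ^ 2) = r) := by
  have sphere : (Jnm n m a).1 ^ 2 + (Jnm n m a).2.1 ^ 2 + (Jnm n m a).2.2 ^ 2 = Rnm n m a ^ 2 := by
    rw [Jnm_fst_sq_add_snd_fst_sq]
    simp only [Jnm, Rnm]
    ring
  refine ⟨sphere, fun r hr hR => ?_⟩
  rw [sphere, hR, Real.sqrt_sq hr.le]

theorem stmt_10 (n m : ℕ) (hn : 1 ≤ n) (hm : 1 ≤ m)
    (a : ℂ × ℂ) (h₁ : a.1 ≠ 0) (h₂ : a.2 ≠ 0) :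
    ((Jnm n m a).1 ^ 2 + (Jnm n m a).2.1 ^ 2 + (Jnm n m a).2.2 ^ 2 = Rnm n m a ^ 2) ∧
    (∀ r : ℝ, 0 < r → Rnm n m a = r →
      Real.sqrt ((Jnm n m a).1 ^ 2 + (Jnm n m a).2.1 ^ 2 + (Jnm n m a).2.2 ^ 2) = r) :=
  stmt_10_general n m a
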